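/- For every β > 0, the sum over all (m,n,p) ∈ ℤ³ of T(m,n,p)·exp(−β·R(m,n,p)) is strictly positive, where T(m,n,p) = mn(m+p)(n+p) and R(m,n,p) = m² + n² + p² + mp + np. -/

import Mathlib

/-!
Completing the square, `R(m,n,p) = (m + p/2)² + (n + p/2)² + p²/2`, while
`T(m,n,p) = m(m+p) · n(n+p)`. Hence for fixed `p` the sum over `(m,n)` factors as
`(∑ₘ m(m+p) e^{-β(m+p/2)²})² · e^{-βp²/2} ≥ 0`, and the fibre `p = 0` contributes
`(∑ₘ m² e^{-βm²})² > 0`. Absolute convergence, which justifies summing fibrewise, follows from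
`4|T| ≤ R²` and `m² + n² + p² ≤ 4R`.
-/

open Real
open scoped Nat

lemma summable_int_exp_neg_mul_sq {c : ℝ} (hc : 0 < c) :
    Summable fun n : ℤ => exp (-c * n ^ 2) := by
  refine (summable_pow_mul_jacobiTheta₂_term_bound 0 (div_pos hc pi_pos) 0).congr fun n => ?_
  field_simp
  ring_nf

lemma summable_int_exp_neg_mul_add_sq {c : ℝ} (hc : 0 < c) (a : ℝ) :
    Summable fun n : ℤ => exp (-c * (n + a) ^ 2) := by
  refine .of_nonneg_of_le (fun _ => (exp_pos _).le) (fun n => ?_)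
    ((summable_int_exp_neg_mul_sq (half_pos hc)).mul_left (exp (c * a ^ 2)))
  rw [← exp_add, exp_le_exp]
  nlinarith [sq_nonneg ((n : ℝ) + 2 * a)]

lemma summable_pow_mul_exp_neg_of_summable_exp_neg {α : Type*} {q : α → ℝ} {c β : ℝ}
    (hq : ∀ a, 0 ≤ q a) (hcβ : c < β) (h : Summable fun a => exp (-c * q a)) (k : ℕ) :
    Summable fun a => q a ^ k * exp (-β * q a) := by
  refine .of_nonneg_of_le (fun a => by have := hq a; positivity) (fun a => ?_)
    (h.mul_left (k ! / (β - c) ^ k))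
  have hδ : 0 < β - c := sub_pos.2 hcβ
  have key := pow_div_factorial_le_exp _ (mul_nonneg hδ.le (hq a)) k
  rw [div_le_iff₀ (by positivity), mul_pow] at key
  calc q a ^ k * exp (-β * q a)
      = (β - c) ^ k * q a ^ k * exp (-β * q a) / (β - c) ^ k := by field_simp
    _ ≤ exp ((β - c) * q a) * k ! * exp (-β * q a) / (β - c) ^ k := by gcongr
    _ = k ! / (β - c) ^ k * exp (-c * q a) := by
        rw [mul_right_comm, ← exp_add]; ring_nf

def fccForm (x y z : ℝ) : ℝ := x ^ 2 + y ^ 2 + z ^ 2 + x * z + y * z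

def fccPoly (x y z : ℝ) : ℝ := x * y * (x + z) * (y + z)

lemma sq_add_sq_add_sq_le_four_mul_fccForm (x y z : ℝ) :
    x ^ 2 + y ^ 2 + z ^ 2 ≤ 4 * fccForm x y z := by
  unfold fccForm
  nlinarith [sq_nonneg (x + y + 2 * z), sq_nonneg (x - y)]

lemma four_mul_abs_fccPoly_le_fccForm_sq (x y z : ℝ) :
    4 * |fccPoly x y z| ≤ fccForm x y z ^ 2 := by
  -- with `u = 4a + z²`, `v = 4b + z²`: `R² - 4ab = (a - b)² + z²(u + v)/2` and
  -- `16(R² + 4ab) = u² + v² + 6uv + 8z⁴`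
  set a := x * (x + z)
  set b := y * (y + z)
  have hR : fccForm x y z = a + b + z ^ 2 := by unfold fccForm; ring
  have hT : fccPoly x y z = a * b := by unfold fccPoly; ring
  have hu : 0 ≤ 4 * a + z ^ 2 := by nlinarith [sq_nonneg (2 * x + z)]
  have hv : 0 ≤ 4 * b + z ^ 2 := by nlinarith [sq_nonneg (2 * y + z)]
  rw [hR, hT]
  rcases abs_cases (a * b) with ⟨h, _⟩ | ⟨h, _⟩ <;> rw [h] <;>
    nlinarith [sq_nonneg (a - b), mul_nonneg hu hv, mul_nonneg (sq_nonneg z) (add_nonneg hu hv),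
      pow_two_nonneg (z ^ 2)]

lemma summable_exp_neg_mul_fccForm {c : ℝ} (hc : 0 < c) :
    Summable fun v : ℤ × ℤ × ℤ => exp (-c * fccForm v.1 v.2.1 v.2.2) := by
  have hg := summable_int_exp_neg_mul_sq (div_pos hc four_pos)
  have hg3 := hg.mul_of_nonneg (hg.mul_of_nonneg hg (fun _ => (exp_pos _).le)
    (fun _ => (exp_pos _).le)) (fun _ => (exp_pos _).le) (fun _ => by positivity)
  refine .of_nonneg_of_le (fun _ => (exp_pos _).le) (fun v => ?_) hg3
  rw [← exp_add, ← exp_add, exp_le_exp]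
  nlinarith [sq_add_sq_add_sq_le_four_mul_fccForm v.1 v.2.1 v.2.2]

noncomputable def fccTerm (β : ℝ) (v : ℤ × ℤ × ℤ) : ℝ :=
  fccPoly v.1 v.2.1 v.2.2 * exp (-β * fccForm v.1 v.2.1 v.2.2)

lemma summable_fccTerm {β : ℝ} (hβ : 0 < β) : Summable (fccTerm β) := by
  have hR : ∀ v : ℤ × ℤ × ℤ, 0 ≤ fccForm v.1 v.2.1 v.2.2 := fun v => by
    nlinarith [sq_add_sq_add_sq_le_four_mul_fccForm v.1 v.2.1 v.2.2, sq_nonneg (v.1 : ℝ),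
      sq_nonneg (v.2.1 : ℝ), sq_nonneg (v.2.2 : ℝ)]
  refine .of_norm_bounded ((summable_pow_mul_exp_neg_of_summable_exp_neg hR (half_lt_self hβ)
    (summable_exp_neg_mul_fccForm (half_pos hβ)) 2).div_const 4) fun v => ?_
  rw [fccTerm, norm_mul, norm_of_nonneg (exp_pos _).le, Real.norm_eq_abs, mul_div_right_comm]
  gcongr
  linarith [four_mul_abs_fccPoly_le_fccForm_sq v.1 v.2.1 v.2.2]

noncomputable def fccFactor (β : ℝ) (p m : ℤ) : ℝ :=
  m * (m + p) * exp (-β * (m + p / 2 : ℝ) ^ 2)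

lemma fccTerm_eq_fccFactor_mul (β : ℝ) (m n p : ℤ) :
    fccTerm β (m, n, p) = fccFactor β p m * fccFactor β p n * exp (-β * p ^ 2 / 2) := by
  have hR : fccForm m n p = (m + p / 2 : ℝ) ^ 2 + (n + p / 2 : ℝ) ^ 2 + p ^ 2 / 2 := by
    unfold fccForm; ring
  simp only [fccTerm, fccFactor, fccPoly, hR, mul_add, exp_add]
  ring_nf

lemma summable_norm_fccFactor {β : ℝ} (hβ : 0 < β) (p : ℤ) :
    Summable fun m => ‖fccFactor β p m‖ := by
  have hmoment := summable_pow_mul_exp_neg_of_summable_exp_neg (fun _ => sq_nonneg _)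
    (half_lt_self hβ) (summable_int_exp_neg_mul_add_sq (half_pos hβ) (p / 2)) 1
  refine .of_nonneg_of_le (fun _ => norm_nonneg _) (fun m => ?_)
    (hmoment.add ((summable_int_exp_neg_mul_add_sq hβ (p / 2)).mul_left ((p / 2 : ℝ) ^ 2)))
  rw [fccFactor, norm_mul, norm_of_nonneg (exp_pos _).le, Real.norm_eq_abs, pow_one, ← add_mul]
  gcongr
  rw [abs_le]
  constructor <;> nlinarith [sq_nonneg ((m : ℝ) + p / 2), sq_nonneg ((p : ℝ) / 2)]

lemma hasSum_fccTerm_fibre {β : ℝ} (hβ : 0 < β) (p : ℤ) :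
    HasSum (fun mn : ℤ × ℤ => fccTerm β (mn.1, mn.2, p))
      ((∑' m, fccFactor β p m) ^ 2 * exp (-β * p ^ 2 / 2)) := by
  have hf := summable_norm_fccFactor hβ p
  simp_rw [fccTerm_eq_fccFactor_mul, sq, tsum_mul_tsum_of_summable_norm hf hf]
  exact (summable_mul_of_summable_norm hf hf).hasSum.mul_right _

lemma tsum_fccFactor_zero_pos {β : ℝ} (hβ : 0 < β) : 0 < ∑' m, fccFactor β 0 m := by
  have hf : ∀ m, fccFactor β 0 m = m ^ 2 * exp (-β * m ^ 2) := fun m => by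
    simp [fccFactor, sq]
  refine (summable_norm_fccFactor hβ 0).of_norm.tsum_pos (fun m => by rw [hf]; positivity) 1 ?_
  rw [hf]
  positivity

theorem stmt11 (β : ℝ) (hβ : 0 < β) :
    0 < ∑' v : ℤ × ℤ × ℤ,
      ((v.1:ℝ) * v.2.1 * ((v.1:ℝ) + v.2.2) * ((v.2.1:ℝ) + v.2.2) *
        Real.exp (-β * ((v.1:ℝ)^2 + (v.2.1:ℝ)^2 + (v.2.2:ℝ)^2
          + v.1 * v.2.2 + v.2.1 * v.2.2))) := by
  change 0 < ∑' v, fccTerm β v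
  -- `e (p, (m, n)) = (m, n, p)`, so that the fibres of the summation are indexed by `p`
  let e : ℤ × ℤ × ℤ ≃ ℤ × ℤ × ℤ := (Equiv.prodComm _ _).trans (Equiv.prodAssoc _ _ _)
  have hsum : HasSum (fun p : ℤ => (∑' m, fccFactor β p m) ^ 2 * exp (-β * p ^ 2 / 2))
      (∑' v, fccTerm β v) := by
    rw [← e.tsum_eq]
    exact (e.summable_iff.2 (summable_fccTerm hβ)).hasSum.prod_fiberwise (hasSum_fccTerm_fibre hβ)
  rw [← hsum.tsum_eq]
  refine hsum.summable.tsum_pos (fun p => by positivity) 0 ?_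
  simpa using pow_pos (tsum_fccFactor_zero_pos hβ) 2
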